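/- Let Γ' = Γ ⊕ Q·δ be a divisible ordered abelian group ordered so that 0 < q·δ < γ for all positive rationals q and all positive γ ∈ Γ (δ infinitesimal with respect to Γ). Let Z ⊆ Γ^n, let h : Z → Γ be a function, and suppose that, for the induced subsets and functions over Γ', there is a term t in +, −, min, max and an element β ∈ Q·δ such that h'(x) = t(x_1,…,x_n, β) for all x ∈ Z'(Γ'). Then h(x) = t(x_1,…,x_n, 0) for all x ∈ Z, i.e., one can reduce the parameter β modulo the convex subgroup Q·δ. -/

import Mathlib

/-!
Since `δ` is infinitesimal with respect to `Γ`, the projection `Γ' = Γ ⊕ ℚ·δ → Γ` killing `ℚ·δ`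
is a monotone group homomorphism, hence commutes with `+`, `−`, `min` and `max`, and it is a
retraction of `Γ → Γ'`. A point of `Z` lies in `Z'(Γ')`, and applying the projection to
`h'(x) = t(x, β)` there gives `h(x) = t(x, 0)`, because `β ∈ ℚ·δ` is sent to `0`.
-/

/-- Terms in the operations `+`, `−`, `min`, `max`, variables and constants. -/
inductive MMTerm (Γ : Type*) (n : ℕ) : Type _ where
  | const : Γ → MMTerm Γ n
  | var : Fin n → MMTerm Γ n
  | add : MMTerm Γ n → MMTerm Γ n → MMTerm Γ n
  | neg : MMTerm Γ n → MMTerm Γ n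
  | min : MMTerm Γ n → MMTerm Γ n → MMTerm Γ n
  | max : MMTerm Γ n → MMTerm Γ n → MMTerm Γ n

def MMTerm.eval {Γ : Type*} [LinearOrder Γ] [AddCommGroup Γ] {n : ℕ} :
    MMTerm Γ n → (Fin n → Γ) → Γ
  | .const c, _ => c
  | .var i, x => x i
  | .add t s, x => t.eval x + s.eval x
  | .neg t, x => -t.eval x
  | .min t s, x => Min.min (t.eval x) (s.eval x)
  | .max t s, x => Max.max (t.eval x) (s.eval x)

/-- Transport of the constants of a term along a map `f : Γ → Δ`. -/
def MMTerm.map {Γ Δ : Type*} {n : ℕ} (f : Γ → Δ) : MMTerm Γ n → MMTerm Δ n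
  | .const c => .const (f c)
  | .var i => .var i
  | .add t s => .add (t.map f) (s.map f)
  | .neg t => .neg (t.map f)
  | .min t s => .min (t.map f) (s.map f)
  | .max t s => .max (t.map f) (s.map f)

/-- The cell in `Δ^n` cut out by a finite system of ℚ-affine inequalities with
constants from `Γ` transported along `f : Γ → Δ`. -/
def cellSet {Γ Δ : Type*} [AddCommGroup Δ] [LinearOrder Δ] [IsOrderedAddMonoid Δ] [Module ℚ Δ] {n : ℕ}
    (f : Γ → Δ) (s : Finset ((Fin n → ℚ) × Γ × Bool)) : Set (Fin n → Δ) :=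
  {x | ∀ p ∈ s, if p.2.2 = true then (∑ j, p.1 j • x j) < f p.2.1
       else (∑ j, p.1 j • x j) ≤ f p.2.1}

namespace MMTerm

variable {n : ℕ}

theorem map_id {Γ : Type*} (t : MMTerm Γ n) : t.map id = t := by
  induction t <;> simp_all [map]

theorem map_map {Γ Δ E : Type*} (f : Γ → Δ) (g : Δ → E) (t : MMTerm Γ n) :
    (t.map f).map g = t.map (g ∘ f) := by
  induction t <;> simp_all [map]

theorem eval_map {Γ Δ : Type*} [AddCommGroup Γ] [LinearOrder Γ] [AddCommGroup Δ] [LinearOrder Δ]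
    (f : Γ →+ Δ) (hf : Monotone f) (t : MMTerm Γ n) (x : Fin n → Γ) :
    (t.map f).eval (f ∘ x) = f (t.eval x) := by
  induction t <;> simp_all [map, eval, hf.map_min, hf.map_max]

theorem eval_map_of_leftInverse {Γ Δ : Type*} [AddCommGroup Γ] [LinearOrder Γ] [AddCommGroup Δ]
    [LinearOrder Δ] (f : Γ →+ Δ) (g : Δ →+ Γ) (hg : Monotone g) (hgf : Function.LeftInverse g f)
    (t : MMTerm Γ n) (y : Fin n → Δ) : g ((t.map f).eval y) = t.eval (g ∘ y) := by
  rw [← eval_map g hg, map_map, hgf.comp_eq_id, map_id]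

end MMTerm

theorem comp_mem_cellSet_iff {Γ Δ : Type*} [AddCommGroup Γ] [LinearOrder Γ] [IsOrderedAddMonoid Γ]
    [Module ℚ Γ] [AddCommGroup Δ] [LinearOrder Δ] [IsOrderedAddMonoid Δ] [Module ℚ Δ] {n : ℕ}
    {f : Γ →+ Δ} (hf : StrictMono f) {s : Finset ((Fin n → ℚ) × Γ × Bool)} {x : Fin n → Γ} :
    f ∘ x ∈ cellSet f s ↔ x ∈ cellSet id s := by
  have hsum : ∀ c : Fin n → ℚ, ∑ j, c j • f (x j) = f (∑ j, c j • x j) := fun c => by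
    simp only [map_sum, map_rat_smul]
  simp only [cellSet, Set.mem_ofPred_eq, Function.comp_apply, id, hsum, hf.lt_iff_lt,
    hf.le_iff_le]

section StandardPart

variable {Γ Γ' : Type*} [AddCommGroup Γ] [AddCommGroup Γ'] [Module ℚ Γ']
  (ι : Γ →+ Γ') (δ : Γ') (hdecomp : ∀ z : Γ', ∃! p : Γ × ℚ, z = ι p.1 + p.2 • δ)

noncomputable def decompEquiv : Γ × ℚ ≃+ Γ' :=
  AddEquiv.ofBijective (ι.coprod (LinearMap.toSpanSingleton ℚ Γ' δ).toAddMonoidHom)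
    ((Function.bijective_iff_existsUnique _).2 fun z => by simpa [eq_comm] using hdecomp z)

noncomputable def standardPart : Γ' →+ Γ :=
  (AddMonoidHom.fst Γ ℚ).comp (decompEquiv ι δ hdecomp).symm.toAddMonoidHom

theorem standardPart_add_smul (a : Γ) (r : ℚ) : standardPart ι δ hdecomp (ι a + r • δ) = a := by
  have he : decompEquiv ι δ hdecomp (a, r) = ι a + r • δ := by simp [decompEquiv]
  rw [← he]
  exact congrArg Prod.fst ((decompEquiv ι δ hdecomp).symm_apply_apply (a, r))

theorem standardPart_apply (a : Γ) : standardPart ι δ hdecomp (ι a) = a := by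
  simpa using standardPart_add_smul ι δ hdecomp a 0

theorem standardPart_smul (r : ℚ) : standardPart ι δ hdecomp (r • δ) = 0 := by
  simpa using standardPart_add_smul ι δ hdecomp 0 r

variable [LinearOrder Γ] [IsOrderedAddMonoid Γ] [LinearOrder Γ'] [IsOrderedAddMonoid Γ']

theorem add_smul_lt_add_smul_of_lt (hinf : ∀ (q : ℚ) (γ : Γ), 0 < γ → q • δ < ι γ)
    {a b : Γ} (hab : a < b) (r s : ℚ) : ι a + r • δ < ι b + s • δ := by
  have h := hinf (r - s) (b - a) (sub_pos.2 hab)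
  rw [map_sub, sub_smul] at h
  rw [add_comm (ι a)]
  exact sub_lt_sub_iff.1 h

theorem standardPart_monotone (hinf : ∀ (q : ℚ) (γ : Γ), 0 < γ → q • δ < ι γ) :
    Monotone (standardPart ι δ hdecomp) := by
  intro z w hzw
  obtain ⟨⟨a, r⟩, rfl, -⟩ := hdecomp z
  obtain ⟨⟨b, s⟩, rfl, -⟩ := hdecomp w
  simp only [standardPart_add_smul]
  by_contra! hba
  exact (add_smul_lt_add_smul_of_lt ι δ hinf hba s r).not_ge hzw

end StandardPart

theorem stmt_16_general {Γ Γ' : Type*} [AddCommGroup Γ] [LinearOrder Γ] [IsOrderedAddMonoid Γ] [Module ℚ Γ]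
    [AddCommGroup Γ'] [LinearOrder Γ'] [IsOrderedAddMonoid Γ'] [Module ℚ Γ']
    (ι : Γ →+ Γ') (hι : StrictMono ι)
    (δ : Γ')
    (hinf : ∀ (q : ℚ) (γ : Γ), 0 < γ → q • δ < ι γ)
    (hdecomp : ∀ z : Γ', ∃! p : Γ × ℚ, z = ι p.1 + p.2 • δ)
    {n : ℕ} (kc : ℕ) (cells : Fin kc → Finset ((Fin n → ℚ) × Γ × Bool))
    (th : MMTerm Γ n) (t : MMTerm Γ (n + 1)) (q : ℚ)
    (hyp : ∀ x : Fin n → Γ', x ∈ ⋃ i, cellSet (fun a => ι a) (cells i) →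
      (th.map ι).eval x = (t.map ι).eval (Fin.snoc x (q • δ))) :
    ∀ x : Fin n → Γ, x ∈ ⋃ i, cellSet (id : Γ → Γ) (cells i) →
      th.eval x = t.eval (Fin.snoc x 0) := by
  intro x hx
  set π := standardPart ι δ hdecomp
  have hπι : Function.LeftInverse π ι := standardPart_apply ι δ hdecomp
  have hπ : Monotone π := standardPart_monotone ι δ hdecomp hinf
  have hx' : ι ∘ x ∈ ⋃ i, cellSet (fun a => ι a) (cells i) := by
    simpa only [Set.mem_iUnion, comp_mem_cellSet_iff hι] using hx
  have key := congrArg π (hyp _ hx')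
  rwa [MMTerm.eval_map_of_leftInverse ι π hπ hπι, MMTerm.eval_map_of_leftInverse ι π hπ hπι,
    Fin.comp_snoc, standardPart_smul, ← Function.comp_assoc, hπι.comp_eq_id,
    Function.id_comp] at key

/-- Let `Γ' = Γ ⊕ ℚ·δ` (ordered so that `δ` is a positive infinitesimal
with respect to `Γ`), `Z ⊆ Γ^n` a definable (semilinear, over `Γ`) set, and
`h : Z → Γ` a definable function (given by a term `th` with constants in `Γ`).  If
there are a term `t` in `+`, `−`, `min`, `max` (with constants in `Γ`) and an element
`β = q·δ ∈ ℚ·δ` such that `h'(x) = t(x_1,…,x_n,β)` for all `x` in the induced set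
`Z'(Γ')`, then `h(x) = t(x_1,…,x_n,0)` on `Z` — i.e. one may reduce the parameter `β`
modulo the convex subgroup `ℚ·δ`. -/
theorem stmt_16 {Γ Γ' : Type*} [AddCommGroup Γ] [LinearOrder Γ] [IsOrderedAddMonoid Γ] [Module ℚ Γ]
    [AddCommGroup Γ'] [LinearOrder Γ'] [IsOrderedAddMonoid Γ'] [Module ℚ Γ']
    (ι : Γ →+ Γ') (hι : StrictMono ι)
    (δ : Γ') (hδ : 0 < δ)
    (hinf : ∀ (q : ℚ) (γ : Γ), 0 < γ → q • δ < ι γ)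
    (hdecomp : ∀ z : Γ', ∃! p : Γ × ℚ, z = ι p.1 + p.2 • δ)
    {n : ℕ} (kc : ℕ) (cells : Fin kc → Finset ((Fin n → ℚ) × Γ × Bool))
    (th : MMTerm Γ n) (t : MMTerm Γ (n + 1)) (q : ℚ)
    (hyp : ∀ x : Fin n → Γ', x ∈ ⋃ i, cellSet (fun a => ι a) (cells i) →
      (th.map ι).eval x = (t.map ι).eval (Fin.snoc x (q • δ))) :
    ∀ x : Fin n → Γ, x ∈ ⋃ i, cellSet (id : Γ → Γ) (cells i) →
      th.eval x = t.eval (Fin.snoc x 0) :=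
  stmt_16_general ι hι δ hinf hdecomp kc cells th t q hyp
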